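/- arXiv:1104.3841 — 6 statements merged into one kernel-verified Lean document; each statement's English description precedes it below -/
import Mathlib

section
/- If M is an n×n Hermitian complex matrix that is minimal, i.e., ‖M‖ ≤ ‖M + D‖ for all real diagonal matrices D (operator norm), then -‖M‖ is an eigenvalue of M. -/
/-!
Let `s ≤ t` be the extreme points of the real spectrum of a self-adjoint `a`. Shifting `a` by the
scalar midpoint `(s + t) / 2` centres the spectrum, so the shifted element has norm `(t - s) / 2`,
and minimality gives `‖a‖ ≤ (t - s) / 2`. Since also `-s ≤ ‖a‖` and `t ≤ ‖a‖`, this forces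
`s = -‖a‖`. Only scalar shifts are used, so the argument works in any unital C⋆-algebra; for
matrices a point of the spectrum is an eigenvalue.
-/

noncomputable def opNorm {n : Type*} [Fintype n] [DecidableEq n] (M : Matrix n n ℂ) : ℝ :=
  ‖(Matrix.toEuclideanCLM (𝕜 := ℂ) M : EuclideanSpace ℂ n →L[ℂ] EuclideanSpace ℂ n)‖

/-- `M` is minimal: its operator norm is ≤ that of `M + D` for every real diagonal `D`. -/
def IsMinimal {n : Type*} [Fintype n] [DecidableEq n] (M : Matrix n n ℂ) : Prop :=
  ∀ d : n → ℝ, opNorm M ≤ opNorm (M + Matrix.diagonal fun i => (d i : ℂ))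

open Set IsometricContinuousFunctionalCalculus
open scoped Matrix.Norms.L2Operator

section CStarAlgebra

variable {A : Type*} [CStarAlgebra A] [Nontrivial A] {a : A}

lemma IsSelfAdjoint.norm_sub_algebraMap_midpoint_le (ha : IsSelfAdjoint a) {s t : ℝ}
    (h : spectrum ℝ a ⊆ Icc s t) : ‖a - algebraMap ℝ A ((s + t) / 2)‖ ≤ (t - s) / 2 := by
  have hb : IsSelfAdjoint (a - algebraMap ℝ A ((s + t) / 2)) :=
    ha.sub (.algebraMap A (.all _))
  obtain ⟨⟨x, hx, hxb⟩, -⟩ := isGreatest_norm_spectrum (𝕜 := ℝ) _ hb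
  rw [← spectrum.sub_singleton_eq] at hx
  obtain ⟨y, hy, _, rfl, rfl⟩ := hx
  obtain ⟨hsy, hyt⟩ := h hy
  rw [← hxb]
  show |y - (s + t) / 2| ≤ (t - s) / 2
  exact abs_le.mpr ⟨by linarith, by linarith⟩

theorem IsSelfAdjoint.neg_norm_mem_spectrum_of_norm_le_norm_add_algebraMap
    (ha : IsSelfAdjoint a) (hmin : ∀ r : ℝ, ‖a‖ ≤ ‖a + algebraMap ℝ A r‖) :
    -‖a‖ ∈ spectrum ℝ a := by
  have hcpt : IsCompact (spectrum ℝ a) := spectrum.isCompact a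
  have hne : (spectrum ℝ a).Nonempty := ContinuousFunctionalCalculus.spectrum_nonempty a ha
  set s := sInf (spectrum ℝ a)
  set t := sSup (spectrum ℝ a)
  have hs : s ∈ spectrum ℝ a := hcpt.sInf_mem hne
  have ht : t ∈ spectrum ℝ a := hcpt.sSup_mem hne
  have hsub : spectrum ℝ a ⊆ Icc s t := fun x hx =>
    ⟨csInf_le hcpt.bddBelow hx, le_csSup hcpt.bddAbove hx⟩
  have hshift : ‖a‖ ≤ (t - s) / 2 := calc
    ‖a‖ ≤ ‖a + algebraMap ℝ A (-((s + t) / 2))‖ := hmin _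
    _ = ‖a - algebraMap ℝ A ((s + t) / 2)‖ := by rw [map_neg, ← sub_eq_add_neg]
    _ ≤ (t - s) / 2 := ha.norm_sub_algebraMap_midpoint_le hsub
  have hs_le := abs_le.mp (norm_spectrum_le a hs ha)
  have ht_le := abs_le.mp (norm_spectrum_le a ht ha)
  have hs_eq : s = -‖a‖ := by linarith [hs_le.1, ht_le.2]
  exact hs_eq ▸ hs

end CStarAlgebra

theorem Matrix.exists_mulVec_eq_smul_of_mem_spectrum {K n : Type*} [Field K] [Fintype n]
    [DecidableEq n] {A : Matrix n n K} {μ : K} (h : μ ∈ spectrum K A) :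
    ∃ v : n → K, v ≠ 0 ∧ A.mulVec v = μ • v := by
  rw [← Matrix.spectrum_toLin', ← Module.End.hasEigenvalue_iff_mem_spectrum] at h
  obtain ⟨v, hv, hv0⟩ := h.exists_hasEigenvector
  exact ⟨v, hv0, by simpa using Module.End.mem_eigenspace_iff.mp hv⟩

-- With the L2 operator norm in scope, `‖M‖` is `opNorm M` by definition.
lemma IsMinimal.norm_le_norm_add_algebraMap {n : Type*} [Fintype n] [DecidableEq n]
    {M : Matrix n n ℂ} (hmin : IsMinimal M) (r : ℝ) :
    ‖M‖ ≤ ‖M + algebraMap ℝ (Matrix n n ℂ) r‖ :=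
  hmin fun _ => r

theorem stmt0 {n : Type*} [Fintype n] [DecidableEq n] [Nonempty n]
    (M : Matrix n n ℂ) (hM : M.IsHermitian) (hmin : IsMinimal M) :
    ∃ v : n → ℂ, v ≠ 0 ∧ M.mulVec v = ((-(opNorm M) : ℝ) : ℂ) • v := by
  have h := hM.isSelfAdjoint.neg_norm_mem_spectrum_of_norm_le_norm_add_algebraMap
    hmin.norm_le_norm_add_algebraMap
  rw [← spectrum.algebraMap_mem_iff ℂ, Complex.coe_algebraMap] at h
  exact Matrix.exists_mulVec_eq_smul_of_mem_spectrum h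
end

section
/- Let S₁ ⟂ S₂ be subspaces of ℂⁿ, λ > 0, and R Hermitian with P_{S₁} R = 0, P_{S₂} R = 0 and ‖R‖ < λ. If there exist nonzero positive semidefinite companion matrices P₁, P₂ with ran(P₁) ⊆ S₁ and ran(P₂) ⊆ S₂, then M = λ P_{S₁} − λ P_{S₂} + R satisfies ‖M‖ ≤ ‖M + D‖ for all real diagonal D, and ‖M‖ = λ. -/
open scoped ComplexOrder

/-- `P` is the orthogonal projection matrix onto the subspace `S` of `ℂⁿ`
(with respect to the standard inner product). -/
def IsOrthProjOn {n : Type*} [Fintype n] [DecidableEq n]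
    (P : Matrix n n ℂ) (S : Submodule ℂ (n → ℂ)) : Prop :=
  P.IsHermitian ∧ P * P = P ∧ LinearMap.range P.mulVecLin = S

/-- Two subspaces of `ℂⁿ` are orthogonal for the standard inner product. -/
def OrthSubspaces {n : Type*} [Fintype n]
    (S₁ S₂ : Submodule ℂ (n → ℂ)) : Prop :=
  ∀ x ∈ S₁, ∀ y ∈ S₂, dotProduct (star x) y = 0

/-!
Write `M = λ (P_{S₁} - P_{S₂}) + R` and `Q = P_{S₁} + P_{S₂}`. The two summands have orthogonal
ranges, the first lives on `ran Q` and `R` on `ran (1 - Q)`, so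
`M* M ≤ λ² Q + ‖R‖² (1 - Q) ≤ λ²`, i.e. `‖M‖ ≤ λ`.
Conversely `M P₁ = λ P₁`, `M P₂ = -λ P₂` and `P₁ - P₂` has zero diagonal, so for every diagonal `D`
the trace duality `|tr (A P)| ≤ ‖A‖ tr P` (for `P ≥ 0`) gives
`λ tr (P₁ + P₂) = Re tr ((M + D) (P₁ - P₂)) ≤ ‖M + D‖ tr (P₁ + P₂)`.
-/

theorem IsSelfAdjoint.mul_eq_zero_symm {R : Type*} [NonUnitalNonAssocSemiring R] [StarRing R]
    {x y : R} (hx : IsSelfAdjoint x) (hy : IsSelfAdjoint y) (hxy : x * y = 0) : y * x = 0 := by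
  simpa [hx.star_eq, hy.star_eq] using congr(star $hxy)

section CStarAlgebra
variable {A : Type*} [CStarAlgebra A] [PartialOrder A] [StarOrderedRing A]

theorem IsStarProjection.star_mul_self_le_norm_sq_smul {p x : A} (hp : IsStarProjection p)
    (hx : x * p = x) : star x * x ≤ ‖x‖ ^ 2 • p :=
  calc star x * x = star p * (star x * x) * p := by
        conv_lhs => rw [← hx]
        simp only [star_mul, mul_assoc]
    _ ≤ ‖star x * x‖ • (star p * p) := CStarAlgebra.star_left_conjugate_le_norm_smul
    _ = ‖x‖ ^ 2 • p := by
        rw [CStarRing.norm_star_mul_self, hp.isSelfAdjoint.star_eq, hp.isIdempotentElem.eq, sq]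

theorem CStarAlgebra.norm_add_le_max_of_isStarProjection {a b q : A} (hq : IsStarProjection q)
    (ha : a * q = a) (hb : b * q = 0) (hab : star a * b = 0) : ‖a + b‖ ≤ max ‖a‖ ‖b‖ := by
  set m := max ‖a‖ ‖b‖
  have hba : star b * a = 0 := by simpa using congr(star $hab)
  have hb' : b * (1 - q) = b := by rw [mul_sub, hb, mul_one, sub_zero]
  have h_sum : star (a + b) * (a + b) ≤ m ^ 2 • (1 : A) :=
    calc star (a + b) * (a + b) = star a * a + star b * b := by
          simp only [star_add, add_mul, mul_add, hab, hba, add_zero, zero_add]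
      _ ≤ ‖a‖ ^ 2 • q + ‖b‖ ^ 2 • (1 - q) :=
          add_le_add (hq.star_mul_self_le_norm_sq_smul ha)
            (hq.one_sub.star_mul_self_le_norm_sq_smul hb')
      _ ≤ m ^ 2 • q + m ^ 2 • (1 - q) := by
          gcongr
          exacts [hq.nonneg, le_max_left _ _, hq.one_sub.nonneg, le_max_right _ _]
      _ = m ^ 2 • (1 : A) := by rw [← smul_add, add_sub_cancel]
  have h_sq : ‖a + b‖ ^ 2 ≤ m ^ 2 :=
    calc ‖a + b‖ ^ 2 = ‖star (a + b) * (a + b)‖ := by rw [CStarRing.norm_star_mul_self, sq]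
      _ ≤ ‖m ^ 2 • (1 : A)‖ :=
          CStarAlgebra.norm_le_norm_of_nonneg_of_le (star_mul_self_nonneg _) h_sum
      _ ≤ m ^ 2 := by
          rw [norm_smul, Real.norm_of_nonneg (by positivity)]
          exact mul_le_of_le_one_right (by positivity) ((IsStarProjection.one A).norm_le)
  exact (pow_le_pow_iff_left₀ (norm_nonneg _) ((norm_nonneg a).trans (le_max_left _ _))
    two_ne_zero).mp h_sq

theorem CStarAlgebra.norm_sub_le_one_of_isStarProjection {p q : A} (hp : IsStarProjection p)
    (hq : IsStarProjection q) (hpq : p * q = 0) : ‖p - q‖ ≤ 1 := by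
  rw [sub_eq_add_neg]
  refine (norm_add_le_max_of_isStarProjection hp hp.isIdempotentElem.eq ?_ ?_).trans
    (max_le (hp.norm_le _) ((norm_neg q).trans_le (hq.norm_le _)))
  · rw [neg_mul, hp.isSelfAdjoint.mul_eq_zero_symm hq.isSelfAdjoint hpq, neg_zero]
  · rw [hp.isSelfAdjoint.star_eq, mul_neg, hpq, neg_zero]

theorem CStarAlgebra.norm_smul_sub_add_le {p q r : A} {lam : ℝ} (hp : IsStarProjection p)
    (hq : IsStarProjection q) (hpq : p * q = 0) (hr : IsSelfAdjoint r) (hpr : p * r = 0)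
    (hqr : q * r = 0) (hr_norm : ‖r‖ ≤ lam) :
    ‖(lam : ℂ) • p - (lam : ℂ) • q + r‖ ≤ lam := by
  have hlam : 0 ≤ lam := (norm_nonneg r).trans hr_norm
  have hqp := hp.isSelfAdjoint.mul_eq_zero_symm hq.isSelfAdjoint hpq
  have hrp := hp.isSelfAdjoint.mul_eq_zero_symm hr hpr
  have hrq := hq.isSelfAdjoint.mul_eq_zero_symm hr hqr
  rw [← smul_sub]
  refine (norm_add_le_max_of_isStarProjection (hp.add hq hpq) ?_ ?_ ?_).trans (max_le ?_ hr_norm)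
  · rw [smul_mul_assoc, sub_mul, mul_add, mul_add, hp.isIdempotentElem.eq, hq.isIdempotentElem.eq,
      hpq, hqp, add_zero, zero_add]
  · rw [mul_add, hrp, hrq, add_zero]
  · rw [star_smul, star_sub, hp.isSelfAdjoint.star_eq, hq.isSelfAdjoint.star_eq, smul_mul_assoc,
      sub_mul, hpr, hqr, sub_zero, smul_zero]
  · rw [norm_smul, Complex.norm_real, Real.norm_of_nonneg hlam]
    exact mul_le_of_le_one_right hlam (norm_sub_le_one_of_isStarProjection hp hq hpq)

end CStarAlgebra

open Matrix

theorem Matrix.trace_mul_conjTranspose_mul_self {m n R : Type*} [Fintype m] [Fintype n]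
    [CommRing R] [StarRing R] (A : Matrix n n R) (B : Matrix m n R) :
    trace (A * (Bᴴ * B)) = ∑ i, B i ⬝ᵥ (A *ᵥ star (B i)) := by
  rw [trace_mul_cycle']
  simp [trace, mul_apply, dotProduct, mulVec]

theorem Matrix.PosSemidef.re_trace_pos {n : Type*} [Fintype n] {P : Matrix n n ℂ}
    (hP : P.PosSemidef) (h0 : P ≠ 0) : 0 < (trace P).re :=
  (Complex.pos_iff.mp (hP.trace_nonneg.lt_of_ne (Ne.symm (mt hP.trace_eq_zero_iff.mp h0)))).1

theorem OrthSubspaces.symm {n : Type*} [Fintype n] {S T : Submodule ℂ (n → ℂ)}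
    (h : OrthSubspaces S T) : OrthSubspaces T S := fun x hx y hy => by
  simpa [← star_dotProduct_star, dotProduct_comm] using congr(star $(h y hy x hx))

section
variable {n : Type*} [Fintype n] [DecidableEq n]

namespace IsOrthProjOn
variable {P A : Matrix n n ℂ} {S T : Submodule ℂ (n → ℂ)}

theorem isStarProjection (hP : IsOrthProjOn P S) : IsStarProjection P :=
  ⟨hP.2.1, hP.1⟩

theorem mulVec_mem (hP : IsOrthProjOn P S) (x : n → ℂ) : P *ᵥ x ∈ S :=
  hP.2.2 ▸ ⟨x, rfl⟩

theorem mul_eq_self (hP : IsOrthProjOn P S) (hA : ∀ x, A *ᵥ x ∈ S) : P * A = A := by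
  refine ext_iff_mulVec.mpr fun x => ?_
  obtain ⟨w, hw⟩ : A *ᵥ x ∈ LinearMap.range P.mulVecLin := hP.2.2 ▸ hA x
  rw [← mulVec_mulVec, ← hw, mulVecLin_apply, mulVec_mulVec, hP.2.1]

theorem mul_eq_zero (hP : IsOrthProjOn P S) (hST : OrthSubspaces S T) (hA : ∀ x, A *ᵥ x ∈ T) :
    P * A = 0 := by
  ext i j
  have hij := hST _ (hP.mulVec_mem (Pi.single i 1)) _ (hA (Pi.single j 1))
  rw [← hP.1.eq]
  simpa [mulVec_single_one, dotProduct, mul_apply] using hij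

end IsOrthProjOn

theorem norm_dotProduct_mulVec_le (A : Matrix n n ℂ) (v : n → ℂ) :
    ‖star v ⬝ᵥ (A *ᵥ v)‖ ≤ opNorm A * (star v ⬝ᵥ v).re := by
  set w := WithLp.toLp 2 v
  have hA : star v ⬝ᵥ (A *ᵥ v) = inner ℂ w (toEuclideanCLM (𝕜 := ℂ) A w) := by
    rw [toEuclideanCLM_toLp, EuclideanSpace.inner_toLp_toLp, dotProduct_comm]
  have hv : (star v ⬝ᵥ v).re = ‖w‖ ^ 2 := by
    rw [← inner_self_eq_norm_sq (𝕜 := ℂ), EuclideanSpace.inner_toLp_toLp, dotProduct_comm]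
    rfl
  rw [hA, hv]
  calc ‖inner ℂ w (toEuclideanCLM (𝕜 := ℂ) A w)‖ ≤ ‖w‖ * (opNorm A * ‖w‖) :=
        (norm_inner_le_norm _ _).trans
          (mul_le_mul_of_nonneg_left ((toEuclideanCLM (𝕜 := ℂ) A).le_opNorm w) (norm_nonneg w))
    _ = opNorm A * ‖w‖ ^ 2 := by ring

theorem norm_trace_mul_le_opNorm_mul {A P : Matrix n n ℂ} (hP : P.PosSemidef) :
    ‖trace (A * P)‖ ≤ opNorm A * (trace P).re := by
  obtain ⟨B, rfl⟩ : ∃ B : Matrix n n ℂ, P = star B * B := by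
    open scoped MatrixOrder in
    exact CStarAlgebra.nonneg_iff_eq_star_mul_self.mp hP.nonneg
  calc ‖trace (A * (Bᴴ * B))‖ = ‖∑ i, B i ⬝ᵥ (A *ᵥ star (B i))‖ := by
        rw [trace_mul_conjTranspose_mul_self]
    _ ≤ ∑ i, ‖B i ⬝ᵥ (A *ᵥ star (B i))‖ := norm_sum_le _ _
    _ ≤ ∑ i, opNorm A * (B i ⬝ᵥ star (B i)).re := by
        gcongr with i
        simpa using norm_dotProduct_mulVec_le A (star (B i))
    _ = opNorm A * (trace (Bᴴ * B)).re := by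
        rw [← Finset.mul_sum, ← Matrix.one_mul (Bᴴ * B), trace_mul_conjTranspose_mul_self,
          Complex.re_sum]
        simp

theorem opNorm_smul_sub_add_le {P₁ P₂ R : Matrix n n ℂ} {lam : ℝ} (hP₁ : IsStarProjection P₁)
    (hP₂ : IsStarProjection P₂) (h₁₂ : P₁ * P₂ = 0) (hR : R.IsHermitian) (hR₁ : P₁ * R = 0)
    (hR₂ : P₂ * R = 0) (hR_norm : opNorm R ≤ lam) :
    opNorm ((lam : ℂ) • P₁ - (lam : ℂ) • P₂ + R) ≤ lam := by
  let φ := toEuclideanCLM (𝕜 := ℂ) (n := n)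
  have hmul {X Y : Matrix n n ℂ} (h : X * Y = 0) : φ X * φ Y = 0 := by rw [← map_mul, h, map_zero]
  rw [opNorm, map_add, map_sub, map_smul, map_smul]
  exact CStarAlgebra.norm_smul_sub_add_le (hP₁.map φ) (hP₂.map φ) (hmul h₁₂)
    (hR.isSelfAdjoint.map φ) (hmul hR₁) (hmul hR₂) hR_norm

theorem le_opNorm_add_diagonal {M P₁ P₂ : Matrix n n ℂ} {lam : ℝ} (hP₁ : P₁.PosSemidef)
    (hP₂ : P₂.PosSemidef) (hP₁0 : P₁ ≠ 0) (hdiag : ∀ i, P₁ i i = P₂ i i)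
    (hMP₁ : M * P₁ = (lam : ℂ) • P₁) (hMP₂ : M * P₂ = -(lam : ℂ) • P₂) (d : n → ℂ) :
    lam ≤ opNorm (M + diagonal d) := by
  set A := M + diagonal d
  have hD : trace (diagonal d * P₁) = trace (diagonal d * P₂) := by simp [trace, hdiag]
  have hA : trace (A * P₁) - trace (A * P₂) = lam * (trace P₁ + trace P₂) := by
    simp only [A, add_mul, trace_add, hMP₁, hMP₂, hD, trace_smul, smul_eq_mul]
    ring
  have hpos : 0 < (trace P₁).re + (trace P₂).re :=
    add_pos_of_pos_of_nonneg (hP₁.re_trace_pos hP₁0) (Complex.nonneg_iff.mp hP₂.trace_nonneg).1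
  refine le_of_mul_le_mul_right ?_ hpos
  calc lam * ((trace P₁).re + (trace P₂).re) = (trace (A * P₁) - trace (A * P₂)).re := by
        rw [hA, Complex.re_ofReal_mul, Complex.add_re]
    _ ≤ ‖trace (A * P₁)‖ + ‖trace (A * P₂)‖ := (Complex.re_le_norm _).trans (norm_sub_le _ _)
    _ ≤ opNorm A * (trace P₁).re + opNorm A * (trace P₂).re :=
        add_le_add (norm_trace_mul_le_opNorm_mul hP₁) (norm_trace_mul_le_opNorm_mul hP₂)
    _ = opNorm A * ((trace P₁).re + (trace P₂).re) := by ring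

end

theorem stmt7_general {n : Type*} [Fintype n] [DecidableEq n]
    (S₁ S₂ : Submodule ℂ (n → ℂ)) (horth : OrthSubspaces S₁ S₂)
    (lam : ℝ)
    (PS₁ PS₂ R P₁ P₂ : Matrix n n ℂ)
    (hPS₁ : IsOrthProjOn PS₁ S₁) (hPS₂ : IsOrthProjOn PS₂ S₂)
    (hR : R.IsHermitian) (hR₁ : PS₁ * R = 0) (hR₂ : PS₂ * R = 0)
    (hRnorm : opNorm R < lam)
    (hP₁ : P₁.PosSemidef) (hP₂ : P₂.PosSemidef) (hP₁0 : P₁ ≠ 0)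
    (hran₁ : ∀ x, P₁.mulVec x ∈ S₁) (hran₂ : ∀ x, P₂.mulVec x ∈ S₂)
    (hcomp₂ : ∀ i, P₁ i i = P₂ i i) :
    IsMinimal ((lam : ℂ) • PS₁ - (lam : ℂ) • PS₂ + R) ∧
      opNorm ((lam : ℂ) • PS₁ - (lam : ℂ) • PS₂ + R) = lam := by
  set M := (lam : ℂ) • PS₁ - (lam : ℂ) • PS₂ + R with hM
  have hRP₁ : R * P₁ = 0 := by
    rw [← hPS₁.mul_eq_self hran₁, ← Matrix.mul_assoc,
      hPS₁.isStarProjection.isSelfAdjoint.mul_eq_zero_symm hR.isSelfAdjoint hR₁, zero_mul]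
  have hRP₂ : R * P₂ = 0 := by
    rw [← hPS₂.mul_eq_self hran₂, ← Matrix.mul_assoc,
      hPS₂.isStarProjection.isSelfAdjoint.mul_eq_zero_symm hR.isSelfAdjoint hR₂, zero_mul]
  have hMP₁ : M * P₁ = (lam : ℂ) • P₁ := by
    simp only [hM, add_mul, sub_mul, smul_mul_assoc, hPS₁.mul_eq_self hran₁,
      hPS₂.mul_eq_zero horth.symm hran₁, hRP₁, smul_zero, sub_zero, add_zero]
  have hMP₂ : M * P₂ = -(lam : ℂ) • P₂ := by
    simp only [hM, add_mul, sub_mul, smul_mul_assoc, hPS₂.mul_eq_self hran₂,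
      hPS₁.mul_eq_zero horth hran₂, hRP₂, smul_zero, zero_sub, add_zero, neg_smul]
  have hlow := le_opNorm_add_diagonal hP₁ hP₂ hP₁0 hcomp₂ hMP₁ hMP₂
  have hnorm : opNorm M = lam := le_antisymm
    (opNorm_smul_sub_add_le hPS₁.isStarProjection hPS₂.isStarProjection
      (hPS₁.mul_eq_zero horth hPS₂.mulVec_mem) hR hR₁ hR₂ hRnorm.le)
    (by simpa using hlow 0)
  exact ⟨fun d => hnorm ▸ hlow _, hnorm⟩

theorem stmt7 {n : Type*} [Fintype n] [DecidableEq n]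
    (S₁ S₂ : Submodule ℂ (n → ℂ)) (horth : OrthSubspaces S₁ S₂)
    (lam : ℝ) (hlam : 0 < lam)
    (PS₁ PS₂ R P₁ P₂ : Matrix n n ℂ)
    (hPS₁ : IsOrthProjOn PS₁ S₁) (hPS₂ : IsOrthProjOn PS₂ S₂)
    (hR : R.IsHermitian) (hR₁ : PS₁ * R = 0) (hR₂ : PS₂ * R = 0)
    (hRnorm : opNorm R < lam)
    (hP₁ : P₁.PosSemidef) (hP₂ : P₂.PosSemidef) (hP₁0 : P₁ ≠ 0) (hP₂0 : P₂ ≠ 0)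
    (hran₁ : ∀ x, P₁.mulVec x ∈ S₁) (hran₂ : ∀ x, P₂.mulVec x ∈ S₂)
    (hcomp₁ : P₁ * P₂ = 0) (hcomp₂ : ∀ i, P₁ i i = P₂ i i) :
    IsMinimal ((lam : ℂ) • PS₁ - (lam : ℂ) • PS₂ + R) ∧
      opNorm ((lam : ℂ) • PS₁ - (lam : ℂ) • PS₂ + R) = lam :=
  stmt7_general S₁ S₂ horth lam PS₁ PS₂ R P₁ P₂ hPS₁ hPS₂ hR hR₁ hR₂ hRnorm hP₁ hP₂ hP₁0 hran₁ hran₂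
    hcomp₂
end

section
/- Let P be positive semidefinite with positive eigenvalues a₁,…,a_r (counted with multiplicity, r < n). Then P has a companion if and only if there exist an orthonormal set {v₁,…,v_r} of eigenvectors of P for a₁,…,a_r and an orthonormal set {v_{r+1},…,v_n} spanning ker P, and scalars x_j ≥ 0, such that Σ_{i=1}^r a_i (v_i ∘ v̄_i) = Σ_{j=r+1}^n x_j (v_j ∘ v̄_j). -/
open scoped ComplexOrder

/-- The family `v` is orthonormal for the standard inner product of `ℂⁿ`. -/
def ONFamily {ι : Type*} [DecidableEq ι] {n : Type*} [Fintype n]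
    (v : ι → (n → ℂ)) : Prop :=
  ∀ i j, dotProduct (star (v i)) (v j) = if i = j then (1 : ℂ) else 0

/-!
If `Q` is a companion of `P`, then `PQ = QP = 0`, so the eigenvectors of the Hermitian matrix
`P - Q` diagonalise `P` and `Q` simultaneously: those with positive eigenvalue lie in `ker Q`,
the others in `ker P` and are eigenvectors of `Q`. Comparing dimensions through orthonormal
families, exactly as many of them lie in `ker P` as there are zero eigenvalues `a_i`; together
with the eigenvectors `u_i` for the positive `a_i` they form the required basis `v`, and the
identity is the equality of the diagonals of `P = Σ aᵢ vᵢvᵢ*` and `Q = Σ xⱼ vⱼvⱼ*`.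
Conversely, `Σ xⱼ vⱼvⱼ*` is a companion of `P`.
-/

open Matrix

variable {m : Type*}

noncomputable def spectralSum {ι : Type*} [Fintype ι] (c : ι → ℝ) (v : ι → m → ℂ) : Matrix m m ℂ :=
  ∑ i, (c i : ℂ) • vecMulVec (v i) (star (v i))

theorem spectralSum_apply_self {ι : Type*} [Fintype ι] (c : ι → ℝ) (v : ι → m → ℂ) (k : m) :
    spectralSum c v k k = ((∑ i, c i * ‖v i k‖ ^ 2 : ℝ) : ℂ) := by
  simp [spectralSum, Matrix.sum_apply, vecMulVec_apply, Complex.mul_conj']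

variable [Fintype m]

namespace ONFamily

variable {ι κ : Type*} [DecidableEq ι] [DecidableEq κ]

theorem comp {v : ι → m → ℂ} (hv : ONFamily v) {f : κ → ι} (hf : Function.Injective f) :
    ONFamily (v ∘ f) := fun i j => by
  simp only [Function.comp_apply, hv (f i), hf.eq_iff]

theorem sumElim {v : ι → m → ℂ} {w : κ → m → ℂ} (hv : ONFamily v) (hw : ONFamily w)
    (hvw : ∀ i k, star (v i) ⬝ᵥ w k = 0) : ONFamily (Sum.elim v w) := by
  have hwv : ∀ k i, star (w k) ⬝ᵥ v i = 0 := fun k i => by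
    rw [star_dotProduct, hvw, star_zero]
  rintro (i | k) (j | l) <;> simp [hv _ _, hw _ _, hvw, hwv]

theorem card_le [Fintype ι] {v : ι → m → ℂ} (hv : ONFamily v) :
    Fintype.card ι ≤ Fintype.card m := by
  have hON : Orthonormal ℂ fun i => WithLp.toLp 2 (v i) := by
    rw [orthonormal_iff_ite]
    intro i j
    rw [EuclideanSpace.inner_eq_star_dotProduct, dotProduct_comm]
    simpa using hv i j
  simpa using hON.linearIndependent.fintype_card_le_finrank

theorem card_add_card_le [Fintype ι] [Fintype κ] {v : ι → m → ℂ} {w : κ → m → ℂ}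
    (hv : ONFamily v) (hw : ONFamily w) (hvw : ∀ i k, star (v i) ⬝ᵥ w k = 0) :
    Fintype.card ι + Fintype.card κ ≤ Fintype.card m := by
  simpa using (hv.sumElim hw hvw).card_le

theorem dite {p : ι → Prop} [DecidablePred p] {u : ι → m → ℂ} {w : κ → m → ℂ}
    (hu : ONFamily u) (hw : ONFamily w) (e : {i // p i} ≃ κ) (huw : ∀ i, ¬p i → ∀ k, star (u i) ⬝ᵥ w k = 0) :
    ONFamily fun i => if h : p i then w (e ⟨i, h⟩) else u i := by
  intro i j
  by_cases hi : p i <;> by_cases hj : p j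
  · simp [hi, hj, hw _ _, e.injective.eq_iff]
  · rw [star_dotProduct]
    simp [hi, hj, huw j hj, ne_of_apply_ne p (by simp [hi, hj] : p i ≠ p j)]
  · simp [hi, hj, huw i hi, ne_of_apply_ne p (by simp [hi, hj] : p i ≠ p j)]
  · simp [hi, hj, hu i j]

theorem matrix_ext [DecidableEq m] {v : m → m → ℂ} (hv : ONFamily v)
    {A B : Matrix m m ℂ} (h : ∀ k, A *ᵥ v k = B *ᵥ v k) : A = B := by
  let W : Matrix m m ℂ := Matrix.of fun p k => v k p
  have hW : Wᴴ * W = 1 := by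
    ext i j
    simpa [W, Matrix.mul_apply, Matrix.one_apply, dotProduct] using hv i j
  have hAW : A * W = B * W := by
    ext p k
    simpa [W, Matrix.mul_apply, mulVec, dotProduct] using congrFun (h k) p
  have hW' : W * Wᴴ = 1 := mul_eq_one_comm.mp hW
  calc A = A * W * Wᴴ := by rw [Matrix.mul_assoc, hW', Matrix.mul_one]
    _ = B * W * Wᴴ := by rw [hAW]
    _ = B := by rw [Matrix.mul_assoc, hW', Matrix.mul_one]

end ONFamily

theorem spectralSum_mulVec {ι : Type*} [Fintype ι] [DecidableEq ι] {v : ι → m → ℂ}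
    (hv : ONFamily v) (c : ι → ℝ) (j : ι) : spectralSum c v *ᵥ v j = (c j : ℂ) • v j := by
  simp [spectralSum, sum_mulVec, smul_mulVec, vecMulVec_mulVec, hv _ j]

theorem posSemidef_spectralSum {ι : Type*} [Fintype ι] {c : ι → ℝ} (hc : ∀ i, 0 ≤ c i)
    (v : ι → m → ℂ) : (spectralSum c v).PosSemidef :=
  posSemidef_sum _ fun i _ =>
    (posSemidef_vecMulVec_self_star (v i)).smul (Complex.zero_le_real.mpr (hc i))

theorem ONFamily.eq_spectralSum [DecidableEq m] {v : m → m → ℂ} (hv : ONFamily v)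
    {A : Matrix m m ℂ} {c : m → ℝ} (hA : ∀ k, A *ᵥ v k = (c k : ℂ) • v k) :
    A = spectralSum c v :=
  hv.matrix_ext fun k => by rw [hA, spectralSum_mulVec hv]

theorem Matrix.IsHermitian.exists_onFamily_eigen [DecidableEq m] {A : Matrix m m ℂ}
    (hA : A.IsHermitian) :
    ∃ (w : m → m → ℂ) (μ : m → ℝ), ONFamily w ∧ ∀ k, A *ᵥ w k = (μ k : ℂ) • w k := by
  refine ⟨fun k => hA.eigenvectorBasis k, hA.eigenvalues, fun i j => ?_, fun k => ?_⟩
  · have h := orthonormal_iff_ite.mp hA.eigenvectorBasis.orthonormal i j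
    rw [EuclideanSpace.inner_eq_star_dotProduct, dotProduct_comm] at h
    simpa using h
  · simpa [Complex.real_smul] using hA.mulVec_eigenvectorBasis k

theorem Matrix.IsHermitian.dotProduct_eq_zero_of_eigen {A : Matrix m m ℂ} (hA : A.IsHermitian)
    {y z : m → ℂ} {α β : ℝ} (hy : A *ᵥ y = (α : ℂ) • y) (hz : A *ᵥ z = (β : ℂ) • z)
    (hαβ : α ≠ β) : star y ⬝ᵥ z = 0 := by
  have h : (α : ℂ) * (star y ⬝ᵥ z) = β * (star y ⬝ᵥ z) :=
    calc (α : ℂ) * (star y ⬝ᵥ z) = star (A *ᵥ y) ⬝ᵥ z := by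
          simp [hy, star_smul, smul_dotProduct]
      _ = star y ⬝ᵥ (A *ᵥ z) := by
          rw [star_mulVec, ← dotProduct_mulVec, hA.eq]
      _ = β * (star y ⬝ᵥ z) := by rw [hz, dotProduct_smul, smul_eq_mul]
  exact (mul_eq_mul_right_iff.mp h).resolve_left (by exact_mod_cast hαβ)

theorem Matrix.IsHermitian.card_eigen_zero_eq [DecidableEq m] {A : Matrix m m ℂ}
    (hA : A.IsHermitian) {u w : m → m → ℂ} (hu : ONFamily u) (hw : ONFamily w) {a b : m → ℝ}
    (hua : ∀ i, A *ᵥ u i = (a i : ℂ) • u i) (hwb : ∀ k, A *ᵥ w k = (b k : ℂ) • w k) :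
    Fintype.card {i // a i = 0} = Fintype.card {k // b k = 0} := by
  have key : ∀ {u w : m → m → ℂ} {a b : m → ℝ}, ONFamily u → ONFamily w →
      (∀ i, A *ᵥ u i = (a i : ℂ) • u i) → (∀ k, A *ᵥ w k = (b k : ℂ) • w k) →
      Fintype.card {i // a i ≠ 0} + Fintype.card {k // b k = 0} ≤ Fintype.card m :=
    fun hu hw hua hwb => ONFamily.card_add_card_le (hu.comp Subtype.val_injective)
      (hw.comp Subtype.val_injective) fun i k =>
        hA.dotProduct_eq_zero_of_eigen (hua i) (hwb k) (by rw [k.2]; exact i.2)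
  have h₁ := key hu hw hua hwb
  have h₂ := key hw hu hwb hua
  have h₃ : Fintype.card {i // a i ≠ 0} = Fintype.card m - Fintype.card {i // a i = 0} :=
    Fintype.card_subtype_compl _
  have h₄ : Fintype.card {k // b k ≠ 0} = Fintype.card m - Fintype.card {k // b k = 0} :=
    Fintype.card_subtype_compl _
  omega

theorem Matrix.PosSemidef.mulVec_eq_zero_of_sub_mulVec {A B : Matrix m m ℂ} (hA : A.PosSemidef)
    (hAB : A * B = 0) {x : m → ℂ} {t : ℝ} (hx : (A - B) *ᵥ x = (t : ℂ) • x) (ht : t ≤ 0) :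
    A *ᵥ x = 0 := by
  have hAAx : A *ᵥ (A *ᵥ x) = (t : ℂ) • (A *ᵥ x) := by
    rw [← mulVec_smul, ← hx, mulVec_mulVec, mulVec_mulVec, Matrix.mul_sub, hAB, sub_zero]
  have hle : star (A *ᵥ x) ⬝ᵥ (A *ᵥ x) ≤ 0 :=
    calc star (A *ᵥ x) ⬝ᵥ (A *ᵥ x) = star x ⬝ᵥ (A *ᵥ (A *ᵥ x)) := by
          rw [star_mulVec, ← dotProduct_mulVec, hA.isHermitian.eq]
      _ = (t : ℂ) * (star x ⬝ᵥ (A *ᵥ x)) := by rw [hAAx, dotProduct_smul, smul_eq_mul]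
      _ ≤ 0 := mul_nonpos_of_nonpos_of_nonneg (by exact_mod_cast ht)
          (hA.dotProduct_mulVec_nonneg x)
  exact dotProduct_star_self_eq_zero.mp (le_antisymm hle (dotProduct_star_self_nonneg _))

theorem mulVec_eq_max_of_sub_mulVec_eq {P Q : Matrix m m ℂ} (hP : P.PosSemidef) (hQ : Q.PosSemidef)
    (hPQ : P * Q = 0) {x : m → ℂ} {t : ℝ} (hx : (P - Q) *ᵥ x = (t : ℂ) • x) :
    P *ᵥ x = ((max t 0 : ℝ) : ℂ) • x ∧ Q *ᵥ x = ((max (-t) 0 : ℝ) : ℂ) • x := by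
  rcases le_or_gt t 0 with ht | ht
  · have hPx := hP.mulVec_eq_zero_of_sub_mulVec hPQ hx ht
    rw [sub_mulVec, hPx, zero_sub, neg_eq_iff_eq_neg] at hx
    simp [hPx, hx, ht]
  · have hQP : Q * P = 0 := by
      simpa [hP.isHermitian.eq, hQ.isHermitian.eq] using congrArg conjTranspose hPQ
    have hx' : (Q - P) *ᵥ x = ((-t : ℝ) : ℂ) • x := by
      rw [← neg_sub, neg_mulVec, hx]; push_cast; rw [neg_smul]
    have hQx := hQ.mulVec_eq_zero_of_sub_mulVec hQP hx' (by linarith)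
    rw [sub_mulVec, hQx, sub_zero] at hx
    simp [hQx, hx, ht.le]

theorem exists_common_eigenbasis_of_mul_eq_zero [DecidableEq m] {P Q : Matrix m m ℂ}
    (hP : P.PosSemidef) (hQ : Q.PosSemidef) (hPQ : P * Q = 0) :
    ∃ (w : m → m → ℂ) (b ν : m → ℝ), ONFamily w ∧ (∀ k, P *ᵥ w k = (b k : ℂ) • w k) ∧
      (∀ k, Q *ᵥ w k = (ν k : ℂ) • w k) ∧ (∀ k, 0 ≤ ν k) ∧ ∀ k, b k ≠ 0 → ν k = 0 := by
  obtain ⟨w, μ, hw, hμ⟩ := (hP.isHermitian.sub hQ.isHermitian).exists_onFamily_eigen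
  refine ⟨w, fun k => max (μ k) 0, fun k => max (-μ k) 0, hw,
    fun k => (mulVec_eq_max_of_sub_mulVec_eq hP hQ hPQ (hμ k)).1,
    fun k => (mulVec_eq_max_of_sub_mulVec_eq hP hQ hPQ (hμ k)).2,
    fun k => le_max_right _ _, fun k hk => ?_⟩
  have : 0 < μ k := by by_contra! h; exact hk (max_eq_right h)
  simp [this.le]

def IsCompanion (P Q : Matrix m m ℂ) : Prop :=
  Q.PosSemidef ∧ P * Q = 0 ∧ ∀ i, P i i = Q i i

theorem isCompanion_spectralSum [DecidableEq m] {P : Matrix m m ℂ} {a x : m → ℝ}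
    {v : m → m → ℂ} (hv : ONFamily v) (hPv : ∀ i, P *ᵥ v i = (a i : ℂ) • v i)
    (hx : ∀ j, 0 ≤ x j) (hax : ∀ j, a j ≠ 0 → x j = 0)
    (hdiag : ∀ k, ∑ i, a i * ‖v i k‖ ^ 2 = ∑ j, x j * ‖v j k‖ ^ 2) :
    IsCompanion P (spectralSum x v) := by
  refine ⟨posSemidef_spectralSum hx v, hv.matrix_ext fun j => ?_, fun k => ?_⟩
  · rw [← mulVec_mulVec, spectralSum_mulVec hv, mulVec_smul, hPv, zero_mulVec, smul_smul]
    by_cases hj : a j = 0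
    · simp [hj]
    · simp [hax j hj]
  · rw [hv.eq_spectralSum hPv, spectralSum_apply_self, spectralSum_apply_self, hdiag k]

theorem IsCompanion.exists_eigenbasis [DecidableEq m] {P Q : Matrix m m ℂ} {a : m → ℝ}
    (ha : ∀ i, 0 ≤ a i) {u : m → m → ℂ} (hu : ONFamily u) (hP : P = spectralSum a u)
    (hQ : IsCompanion P Q) :
    ∃ v : m → m → ℂ, ONFamily v ∧ (∀ i, P *ᵥ v i = (a i : ℂ) • v i) ∧
      ∃ x : m → ℝ, (∀ j, 0 ≤ x j) ∧ (∀ j, a j ≠ 0 → x j = 0) ∧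
        ∀ k, ∑ i, a i * ‖v i k‖ ^ 2 = ∑ j, x j * ‖v j k‖ ^ 2 := by
  obtain ⟨hQpsd, hPQ, hdiag⟩ := hQ
  have hPpsd : P.PosSemidef := hP ▸ posSemidef_spectralSum ha u
  have hPu : ∀ i, P *ᵥ u i = (a i : ℂ) • u i := fun i => hP ▸ spectralSum_mulVec hu a i
  obtain ⟨w, b, ν, hw, hPw, hQw, hν, hbν⟩ :=
    exists_common_eigenbasis_of_mul_eq_zero hPpsd hQpsd hPQ
  let e : {i // a i = 0} ≃ {k // b k = 0} :=
    Fintype.equivOfCardEq (hPpsd.isHermitian.card_eigen_zero_eq hu hw hPu hPw)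
  have hPwe : ∀ i, P *ᵥ w (e i) = 0 := fun i => by simp [hPw, (e i).2]
  refine ⟨fun i => if h : a i = 0 then w (e ⟨i, h⟩) else u i,
    hu.dite (hw.comp Subtype.val_injective) e fun i hi k =>
      hPpsd.isHermitian.dotProduct_eq_zero_of_eigen (hPu i) (hPw k) (by rw [k.2]; exact hi),
    fun i => ?_, fun j => if h : a j = 0 then ν (e ⟨j, h⟩) else 0,
    fun j => ?_, fun j hj => dif_neg hj, fun k => ?_⟩
  · by_cases h : a i = 0 <;> simp [h, hPwe, hPu]
  · by_cases h : a j = 0 <;> simp [h, hν]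
  · have hPQkk : ∑ i, a i * ‖u i k‖ ^ 2 = ∑ κ, ν κ * ‖w κ k‖ ^ 2 := by
      have := hdiag k
      rwa [hP, hw.eq_spectralSum hQw, spectralSum_apply_self, spectralSum_apply_self,
        Complex.ofReal_inj] at this
    calc ∑ i, a i * ‖(if h : a i = 0 then w (e ⟨i, h⟩) else u i) k‖ ^ 2
        = ∑ i, a i * ‖u i k‖ ^ 2 := by
          refine Finset.sum_congr rfl fun i _ => ?_
          by_cases h : a i = 0 <;> simp [h]
      _ = ∑ κ, ν κ * ‖w κ k‖ ^ 2 := hPQkk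
      _ = ∑ κ : {k // b k = 0}, ν κ * ‖w κ k‖ ^ 2 := by
          rw [← Fintype.sum_subtype_add_sum_subtype (fun κ => b κ = 0), add_eq_left]
          exact Finset.sum_eq_zero fun κ _ => by simp [hbν κ κ.2]
      _ = ∑ i : {i // a i = 0}, ν (e i) * ‖w (e i) k‖ ^ 2 :=
          (e.sum_comp fun κ => ν κ * ‖w κ k‖ ^ 2).symm
      _ = _ := by
          rw [← Fintype.sum_subtype_add_sum_subtype (fun i => a i = 0)]
          simp [fun i : {i // a i = 0} => i.2, fun i : {i // ¬a i = 0} => i.2]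

theorem stmt10_general (n r : ℕ)
    (P : Matrix (Fin n) (Fin n) ℂ) (a : Fin n → ℝ)
    (hapos : ∀ i : Fin n, (i : ℕ) < r → 0 < a i)
    (ha0 : ∀ i : Fin n, r ≤ (i : ℕ) → a i = 0)
    (u : Fin n → (Fin n → ℂ)) (hu : ONFamily u)
    (hP : P = ∑ i, (a i : ℂ) • Matrix.vecMulVec (u i) (star (u i))) :
    (∃ Q : Matrix (Fin n) (Fin n) ℂ, Q.PosSemidef ∧ P * Q = 0 ∧ ∀ i, P i i = Q i i) ↔
    (∃ v : Fin n → (Fin n → ℂ), ONFamily v ∧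
      (∀ i, P.mulVec (v i) = (a i : ℂ) • v i) ∧
      ∃ x : Fin n → ℝ, (∀ j, 0 ≤ x j) ∧ (∀ j : Fin n, (j : ℕ) < r → x j = 0) ∧
        ∀ k, ∑ i, a i * ‖v i k‖ ^ 2 = ∑ j, x j * ‖v j k‖ ^ 2) := by
  have ha : ∀ i, 0 ≤ a i := fun i =>
    (lt_or_ge (i : ℕ) r).elim (fun h => (hapos i h).le) fun h => (ha0 i h).ge
  constructor
  · rintro ⟨Q, hQ⟩
    obtain ⟨v, hv, hPv, x, hx, hax, hdiag⟩ := IsCompanion.exists_eigenbasis ha hu hP hQ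
    exact ⟨v, hv, hPv, x, hx, fun j hj => hax j (hapos j hj).ne', hdiag⟩
  · rintro ⟨v, hv, hPv, x, hx, hxr, hdiag⟩
    exact ⟨_, isCompanion_spectralSum hv hPv hx
      (fun j hj => hxr j (lt_of_not_ge fun h => hj (ha0 j h))) hdiag⟩

theorem stmt10 (n r : ℕ) (hr : 0 < r) (hrn : r < n)
    (P : Matrix (Fin n) (Fin n) ℂ) (a : Fin n → ℝ)
    (hapos : ∀ i : Fin n, (i : ℕ) < r → 0 < a i)
    (ha0 : ∀ i : Fin n, r ≤ (i : ℕ) → a i = 0)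
    (u : Fin n → (Fin n → ℂ)) (hu : ONFamily u)
    (hP : P = ∑ i, (a i : ℂ) • Matrix.vecMulVec (u i) (star (u i))) :
    (∃ Q : Matrix (Fin n) (Fin n) ℂ, Q.PosSemidef ∧ P * Q = 0 ∧ ∀ i, P i i = Q i i) ↔
    (∃ v : Fin n → (Fin n → ℂ), ONFamily v ∧
      (∀ i, P.mulVec (v i) = (a i : ℂ) • v i) ∧
      ∃ x : Fin n → ℝ, (∀ j, 0 ≤ x j) ∧ (∀ j : Fin n, (j : ℕ) < r → x j = 0) ∧
        ∀ k, ∑ i, a i * ‖v i k‖ ^ 2 = ∑ j, x j * ‖v j k‖ ^ 2) :=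
  stmt10_general n r P a hapos ha0 u hu hP
end

section
/- Let {v_k}_{k=1}^n be an orthonormal basis of ℂⁿ, 1 ≤ r, s with r + s ≤ n, λ > 0, and real numbers λ_h with |λ_h| < λ for r < h ≤ n−s. Suppose a_i > 0 (1 ≤ i ≤ r) and x_j ≥ 0 (n−s < j ≤ n) satisfy Σ a_i (v_i ∘ v̄_i) = Σ x_j (v_j ∘ v̄_j). Then M = λ Σ_{i=1}^r v_i⊗v_i + Σ_{h=r+1}^{n−s} λ_h v_h⊗v_h − λ Σ_{j=n−s+1}^n v_j⊗v_j is Hermitian and minimal: ‖M‖ ≤ ‖M + D‖ for every real diagonal D. -/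
/-!
The `vᵢ` are orthonormal eigenvectors of `M` with eigenvalues `μᵢ`, `|μᵢ| ≤ λ`, so `‖M‖ ≤ λ`
by Bessel's inequality. Conversely, for a real diagonal `D` the Rayleigh quotient of `M + D` at
`vᵢ` is `μᵢ + ∑ₖ dₖ |vᵢₖ|²`, bounded in absolute value by `N = ‖M + D‖`. Averaging it with the
weights `aᵢ` over the `λ`-block and over the `-λ`-block, the hypothesis
`∑ aᵢ (vᵢ ∘ v̄ᵢ) = ∑ aⱼ (vⱼ ∘ v̄ⱼ)` makes the contributions of `D`, and the total masses `A`,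
of the two blocks agree; what is left is `A (λ - N) ≤ A (N - λ)` with `A > 0`, i.e. `λ ≤ N`.
-/

open scoped ComplexOrder

open Matrix InnerProductSpace WithLp

theorem Matrix.isHermitian_sum_smul_vecMulVec_star {ι n : Type*} [Fintype ι]
    (μ : ι → ℝ) (v : ι → n → ℂ) :
    (∑ i, (μ i : ℂ) • vecMulVec (v i) (star (v i))).IsHermitian := by
  simp [IsHermitian, conjTranspose_sum, conjTranspose_smul, conjTranspose_vecMulVec]

theorem Matrix.toEuclideanCLM_vecMulVec_star {𝕜 n : Type*} [RCLike 𝕜] [Fintype n]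
    [DecidableEq n] (x y : n → 𝕜) :
    toEuclideanCLM (𝕜 := 𝕜) (vecMulVec x (star y)) = rankOne 𝕜 (toLp 2 x) (toLp 2 y) := by
  ext z k
  simp [vecMulVec_apply, mulVec, dotProduct, EuclideanSpace.inner_eq_star_dotProduct,
    Finset.mul_sum, mul_comm, mul_left_comm]

theorem Matrix.toEuclideanCLM_sum_smul_vecMulVec_star {𝕜 ι n : Type*} [RCLike 𝕜] [Fintype ι]
    [Fintype n] [DecidableEq n] (μ : ι → 𝕜) (v : ι → n → 𝕜) :
    toEuclideanCLM (𝕜 := 𝕜) (∑ i, μ i • vecMulVec (v i) (star (v i))) =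
      ∑ i, μ i • rankOne 𝕜 (toLp 2 (v i)) (toLp 2 (v i)) := by
  simp only [map_sum, map_smul, toEuclideanCLM_vecMulVec_star]

theorem Matrix.rayleighQuotient_toEuclideanCLM_diagonal {n : Type*} [Fintype n]
    [DecidableEq n] (d : n → ℝ) (u : EuclideanSpace ℂ n) :
    (toEuclideanCLM (𝕜 := ℂ) (diagonal fun k => (d k : ℂ))).rayleighQuotient u =
      (∑ k, d k * ‖u k‖ ^ 2) / ‖u‖ ^ 2 := by
  rw [ContinuousLinearMap.rayleighQuotient, ContinuousLinearMap.reApplyInnerSelf_apply,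
    EuclideanSpace.inner_eq_star_dotProduct]
  congr 1
  simp only [ofLp_toEuclideanCLM, dotProduct, map_sum]
  refine Finset.sum_congr rfl fun k _ => ?_
  rw [Pi.star_apply, mulVec_diagonal, star_mul', RCLike.star_def,
    Complex.conj_ofReal, mul_left_comm, Complex.mul_conj']
  norm_cast

theorem ContinuousLinearMap.rayleighQuotient_eq_of_apply_eq_smul {𝕜 E : Type*} [RCLike 𝕜]
    [NormedAddCommGroup E] [InnerProductSpace 𝕜 E] {T : E →L[𝕜] E} {x : E} {c : ℝ}
    (hx : x ≠ 0) (h : T x = (c : 𝕜) • x) : T.rayleighQuotient x = c := by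
  rw [rayleighQuotient, reApplyInnerSelf_apply, h, inner_smul_left, inner_self_eq_norm_sq_to_K,
    RCLike.conj_ofReal, ← RCLike.ofReal_pow, ← RCLike.ofReal_mul, RCLike.ofReal_re]
  field_simp [norm_ne_zero_iff.mpr hx]

section Orthonormal

variable {𝕜 E ι : Type*} [RCLike 𝕜] [NormedAddCommGroup E] [InnerProductSpace 𝕜 E] [Fintype ι]
  {w : ι → E}

theorem Orthonormal.sum_smul_rankOne_apply [DecidableEq ι] (hw : Orthonormal 𝕜 w)
    (μ : ι → 𝕜) (i : ι) : (∑ j, μ j • rankOne 𝕜 (w j) (w j)) (w i) = μ i • w i := by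
  simp [orthonormal_iff_ite.mp hw]

theorem Orthonormal.norm_sum_smul_rankOne_le (hw : Orthonormal 𝕜 w) {μ : ι → 𝕜} {c : ℝ}
    (hc : 0 ≤ c) (hμ : ∀ i, ‖μ i‖ ≤ c) :
    ‖∑ j, μ j • rankOne 𝕜 (w j) (w j)‖ ≤ c := by
  refine ContinuousLinearMap.opNorm_le_bound _ hc fun x => ?_
  have hx : (∑ j, μ j • rankOne 𝕜 (w j) (w j)) x = ∑ j, (μ j * inner 𝕜 (w j) x) • w j := by
    simp [mul_smul]
  refine le_of_sq_le_sq ?_ (by positivity)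
  calc ‖(∑ j, μ j • rankOne 𝕜 (w j) (w j)) x‖ ^ 2
      = ∑ j, ‖μ j‖ ^ 2 * ‖inner 𝕜 (w j) x‖ ^ 2 := by
        rw [hx, @norm_sq_eq_re_inner 𝕜, hw.inner_sum, map_sum]
        refine Finset.sum_congr rfl fun j _ => ?_
        rw [RCLike.conj_mul, ← RCLike.ofReal_pow, RCLike.ofReal_re, norm_mul, mul_pow]
    _ ≤ ∑ j, c ^ 2 * ‖inner 𝕜 (w j) x‖ ^ 2 := by
        gcongr with j
        exact hμ j
    _ ≤ c ^ 2 * ‖x‖ ^ 2 := by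
        rw [← Finset.mul_sum]
        gcongr
        exact hw.sum_inner_products_le x
    _ = (c * ‖x‖) ^ 2 := by ring

end Orthonormal

namespace ONFamily

variable {ι n : Type*} [DecidableEq ι] [Fintype n] {v : ι → n → ℂ}

theorem orthonormal (hv : ONFamily v) : Orthonormal ℂ fun i => toLp 2 (v i) := by
  rw [orthonormal_iff_ite]
  intro i j
  rw [EuclideanSpace.inner_toLp_toLp, dotProduct_comm]
  exact hv i j

theorem sum_norm_sq_eq_one (hv : ONFamily v) (i : ι) : ∑ k, ‖v i k‖ ^ 2 = 1 := by
  simpa [hv.orthonormal.norm_eq_one] using (EuclideanSpace.norm_sq_eq (toLp 2 (v i))).symm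

theorem opNorm_sum_smul_vecMulVec_star_le [Fintype ι] [DecidableEq n] (hv : ONFamily v)
    {μ : ι → ℂ} {c : ℝ} (hc : 0 ≤ c) (hμ : ∀ i, ‖μ i‖ ≤ c) :
    opNorm (∑ i, μ i • vecMulVec (v i) (star (v i))) ≤ c := by
  rw [opNorm, toEuclideanCLM_sum_smul_vecMulVec_star]
  exact hv.orthonormal.norm_sum_smul_rankOne_le hc hμ

theorem abs_add_sum_mul_norm_sq_le_opNorm [Fintype ι] [DecidableEq n] (hv : ONFamily v)
    (μ : ι → ℝ) (d : n → ℝ) (i : ι) :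
    |μ i + ∑ k, d k * ‖v i k‖ ^ 2| ≤
      opNorm (∑ j, (μ j : ℂ) • vecMulVec (v j) (star (v j)) + diagonal fun k => (d k : ℂ)) := by
  have hw := hv.orthonormal
  have hR : (toEuclideanCLM (𝕜 := ℂ) (∑ j, (μ j : ℂ) • vecMulVec (v j) (star (v j)) +
      diagonal fun k => (d k : ℂ))).rayleighQuotient (toLp 2 (v i)) =
        μ i + ∑ k, d k * ‖v i k‖ ^ 2 := by
    rw [map_add, ContinuousLinearMap.rayleighQuotient_add, toEuclideanCLM_sum_smul_vecMulVec_star,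
      ContinuousLinearMap.rayleighQuotient_eq_of_apply_eq_smul (hw.ne_zero i)
        (hw.sum_smul_rankOne_apply _ i),
      rayleighQuotient_toEuclideanCLM_diagonal, hw.norm_eq_one]
    simp
  exact hR ▸ ContinuousLinearMap.rayleighQuotient_le_norm _ _

end ONFamily

theorem Finset.sum_mul_sum_eq_of_forall_sum_mul_eq {ι κ R : Type*} [Fintype κ] [CommSemiring R]
    {s t : Finset ι} {a : ι → R} {p : ι → κ → R}
    (h : ∀ k, ∑ i ∈ s, a i * p i k = ∑ j ∈ t, a j * p j k) (d : κ → R) :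
    ∑ i ∈ s, a i * ∑ k, d k * p i k = ∑ j ∈ t, a j * ∑ k, d k * p j k := by
  have key (u : Finset ι) :
      ∑ i ∈ u, a i * ∑ k, d k * p i k = ∑ k, d k * ∑ i ∈ u, a i * p i k := by
    simp_rw [Finset.mul_sum]
    rw [Finset.sum_comm]
    exact Finset.sum_congr rfl fun k _ => Finset.sum_congr rfl fun i _ => by ring
  simp only [key, h]

theorem le_of_sum_mul_sub_eq_sum_mul_add {ι : Type*} {s t : Finset ι} {a F : ι → ℝ} {c N : ℝ}
    (hs : s.Nonempty) (has : ∀ i ∈ s, 0 < a i) (hat : ∀ j ∈ t, 0 ≤ a j)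
    (hFs : ∀ i ∈ s, F i ≤ N) (hFt : ∀ j ∈ t, -N ≤ F j)
    (hmass : ∑ i ∈ s, a i = ∑ j ∈ t, a j)
    (h : ∑ i ∈ s, a i * (F i - c) = ∑ j ∈ t, a j * (F j + c)) : c ≤ N := by
  have hpos : 0 < ∑ i ∈ s, a i := Finset.sum_pos has hs
  have hupper : ∑ i ∈ s, a i * (F i - c) ≤ (∑ i ∈ s, a i) * (N - c) := by
    rw [Finset.sum_mul]
    exact Finset.sum_le_sum fun i hi =>
      mul_le_mul_of_nonneg_left (by linarith [hFs i hi]) (has i hi).le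
  have hlower : (∑ j ∈ t, a j) * (c - N) ≤ ∑ j ∈ t, a j * (F j + c) := by
    rw [Finset.sum_mul]
    exact Finset.sum_le_sum fun j hj =>
      mul_le_mul_of_nonneg_left (by linarith [hFt j hj]) (hat j hj)
  rw [← hmass, ← h] at hlower
  nlinarith

theorem stmt14_general (n r s : ℕ) (hr : 1 ≤ r) (hrs : r + s ≤ n)
    (v : Fin n → (Fin n → ℂ)) (hv : ONFamily v)
    (lam : ℝ) (hlam : 0 < lam)
    (mu : Fin n → ℝ)
    (hmu₁ : ∀ i : Fin n, (i : ℕ) < r → mu i = lam)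
    (hmu₂ : ∀ i : Fin n, r ≤ (i : ℕ) → (i : ℕ) < n - s → |mu i| < lam)
    (hmu₃ : ∀ i : Fin n, n - s ≤ (i : ℕ) → mu i = -lam)
    (a : Fin n → ℝ)
    (hapos : ∀ i : Fin n, (i : ℕ) < r → 0 < a i)
    (hxnn : ∀ j : Fin n, n - s ≤ (j : ℕ) → 0 ≤ a j)
    (heq : ∀ k, ∑ i ∈ Finset.univ.filter (fun i : Fin n => (i : ℕ) < r), a i * ‖v i k‖ ^ 2 =
      ∑ j ∈ Finset.univ.filter (fun j : Fin n => n - s ≤ (j : ℕ)), a j * ‖v j k‖ ^ 2) :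
    (∑ i, ((mu i : ℝ) : ℂ) • Matrix.vecMulVec (v i) (star (v i))).IsHermitian ∧
      IsMinimal (∑ i, ((mu i : ℝ) : ℂ) • Matrix.vecMulVec (v i) (star (v i))) := by
  refine ⟨isHermitian_sum_smul_vecMulVec_star mu v, fun d => ?_⟩
  have hmu (i : Fin n) : ‖(mu i : ℂ)‖ ≤ lam := by
    rw [Complex.norm_real, Real.norm_eq_abs]
    rcases lt_or_ge (i : ℕ) r with hi | hi
    · rw [hmu₁ i hi, abs_of_pos hlam]
    rcases lt_or_ge (i : ℕ) (n - s) with hi' | hi'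
    · exact (hmu₂ i hi hi').le
    · rw [hmu₃ i hi', abs_neg, abs_of_pos hlam]
  have hF := hv.abs_add_sum_mul_norm_sq_le_opNorm mu d
  set R := Finset.univ.filter fun i : Fin n => (i : ℕ) < r
  set S := Finset.univ.filter fun j : Fin n => n - s ≤ (j : ℕ)
  refine (hv.opNorm_sum_smul_vecMulVec_star_le hlam.le hmu).trans
    (le_of_sum_mul_sub_eq_sum_mul_add (s := R) (t := S) (a := a)
      (F := fun i => mu i + ∑ k, d k * ‖v i k‖ ^ 2) ⟨⟨0, by omega⟩, by simp [R]; omega⟩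
      (fun i hi => hapos i (by simpa [R] using hi)) (fun j hj => hxnn j (by simpa [S] using hj))
      (fun i _ => (le_abs_self _).trans (hF i)) (fun j _ => neg_le_of_abs_le (hF j)) ?_ ?_)
  · simpa only [one_mul, hv.sum_norm_sq_eq_one, mul_one] using
      Finset.sum_mul_sum_eq_of_forall_sum_mul_eq heq fun _ => 1
  calc ∑ i ∈ R, a i * (mu i + ∑ k, d k * ‖v i k‖ ^ 2 - lam)
      = ∑ i ∈ R, a i * ∑ k, d k * ‖v i k‖ ^ 2 :=
        Finset.sum_congr rfl fun i hi => by rw [hmu₁ i (by simpa [R] using hi)]; ring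
    _ = ∑ j ∈ S, a j * ∑ k, d k * ‖v j k‖ ^ 2 := Finset.sum_mul_sum_eq_of_forall_sum_mul_eq heq d
    _ = ∑ j ∈ S, a j * (mu j + ∑ k, d k * ‖v j k‖ ^ 2 + lam) :=
        Finset.sum_congr rfl fun j hj => by rw [hmu₃ j (by simpa [S] using hj)]; ring

theorem stmt14 (n r s : ℕ) (hr : 1 ≤ r) (hs : 1 ≤ s) (hrs : r + s ≤ n)
    (v : Fin n → (Fin n → ℂ)) (hv : ONFamily v)
    (lam : ℝ) (hlam : 0 < lam)
    (mu : Fin n → ℝ)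
    (hmu₁ : ∀ i : Fin n, (i : ℕ) < r → mu i = lam)
    (hmu₂ : ∀ i : Fin n, r ≤ (i : ℕ) → (i : ℕ) < n - s → |mu i| < lam)
    (hmu₃ : ∀ i : Fin n, n - s ≤ (i : ℕ) → mu i = -lam)
    (a : Fin n → ℝ)
    (hapos : ∀ i : Fin n, (i : ℕ) < r → 0 < a i)
    (hxnn : ∀ j : Fin n, n - s ≤ (j : ℕ) → 0 ≤ a j)
    (heq : ∀ k, ∑ i ∈ Finset.univ.filter (fun i : Fin n => (i : ℕ) < r), a i * ‖v i k‖ ^ 2 =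
      ∑ j ∈ Finset.univ.filter (fun j : Fin n => n - s ≤ (j : ℕ)), a j * ‖v j k‖ ^ 2) :
    (∑ i, ((mu i : ℝ) : ℂ) • Matrix.vecMulVec (v i) (star (v i))).IsHermitian ∧
      IsMinimal (∑ i, ((mu i : ℝ) : ℂ) • Matrix.vecMulVec (v i) (star (v i))) :=
  stmt14_general n r s hr hrs v hv lam hlam mu hmu₁ hmu₂ hmu₃ a hapos hxnn heq
end

section
/- Let H be a 3×3 complex Hadamard matrix (all entries of modulus 1, mutually orthogonal columns) and U = H/√3. Let P = U diag(4,0,0) U* and Q_t = U diag(0, 4−t, t) U* for 0 ≤ t ≤ 4. Then P Q_t = 0 and the diagonal entries of P and Q_t coincide (both constant equal to 4/3), so each Q_t is a companion of P, giving infinitely many distinct companions. -/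
open scoped ComplexOrder
open Matrix

/-- `P = U diag(4,0,0) U*`. -/
noncomputable def Pmat (U : Matrix (Fin 3) (Fin 3) ℂ) : Matrix (Fin 3) (Fin 3) ℂ :=
  U * Matrix.diagonal ![(4 : ℂ), 0, 0] * Uᴴ

/-- `Q_t = U diag(0, 4−t, t) U*`. -/
noncomputable def Qmat (U : Matrix (Fin 3) (Fin 3) ℂ) (t : ℝ) : Matrix (Fin 3) (Fin 3) ℂ :=
  U * Matrix.diagonal ![(0 : ℂ), ((4 - t : ℝ) : ℂ), (t : ℂ)] * Uᴴ

/-!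
Since `H` is a Hadamard matrix, `U = H / √3` is unitary with `|U i k|² = 1/3`. Hence
`U diag(d) U*` has every diagonal entry equal to the mean of `d`, which is `4/3` for both
`P` and `Q_t`; conjugation by `U` turns products into products of diagonals, so
`P Q_t = U diag(0,0,0) U* = 0`; and `d ↦ U diag(d) U*` is injective, which separates the `Q_t`.
-/

namespace Matrix

variable {n : Type*} [Fintype n]

theorem conjTranspose_mul_self_of_hadamard [DecidableEq n] {H : Matrix n n ℂ}
    (hmod : ∀ i j, ‖H i j‖ = 1)
    (horth : ∀ j k, j ≠ k → dotProduct (star fun i => H i j) (fun i => H i k) = 0) :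
    Hᴴ * H = (Fintype.card n : ℂ) • 1 := by
  ext j k
  rcases eq_or_ne j k with rfl | hjk
  · simp [mul_apply, Complex.conj_mul', hmod]
  · simpa [mul_apply, one_apply_ne hjk, dotProduct] using horth j k hjk

theorem conjTranspose_mul_self_of_normalized_hadamard [DecidableEq n] {H U : Matrix n n ℂ}
    (hmod : ∀ i j, ‖H i j‖ = 1)
    (horth : ∀ j k, j ≠ k → dotProduct (star fun i => H i j) (fun i => H i k) = 0)
    (hU : U = (((√(Fintype.card n : ℝ))⁻¹ : ℝ) : ℂ) • H) :
    Uᴴ * U = 1 := by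
  cases isEmpty_or_nonempty n
  · exact Subsingleton.elim _ _
  set c : ℝ := (√(Fintype.card n : ℝ))⁻¹
  have hpos : (0 : ℝ) < Fintype.card n := mod_cast Fintype.card_pos
  have hc : c * c * Fintype.card n = 1 := by
    rw [← sq, inv_pow, Real.sq_sqrt hpos.le, inv_mul_cancel₀ hpos.ne']
  rw [hU, conjTranspose_smul, Matrix.smul_mul, Matrix.mul_smul,
    conjTranspose_mul_self_of_hadamard hmod horth, smul_smul, smul_smul, Complex.star_def,
    Complex.conj_ofReal, show (c * c * Fintype.card n : ℂ) = 1 from mod_cast hc, one_smul]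

theorem norm_sq_apply_of_normalized_hadamard {H U : Matrix n n ℂ}
    (hmod : ∀ i j, ‖H i j‖ = 1) (hU : U = (((√(Fintype.card n : ℝ))⁻¹ : ℝ) : ℂ) • H) (i j : n) :
    ‖U i j‖ ^ 2 = (Fintype.card n : ℝ)⁻¹ := by
  simp [hU, hmod, inv_pow]

theorem mul_diagonal_mul_conjTranspose_apply_self [DecidableEq n] (U : Matrix n n ℂ)
    (d : n → ℂ) (i : n) :
    (U * diagonal d * Uᴴ) i i = ∑ k, (‖U i k‖ ^ 2 : ℝ) * d k := by
  rw [mul_apply]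
  refine Finset.sum_congr rfl fun k _ => ?_
  rw [mul_diagonal, conjTranspose_apply, RCLike.star_def, mul_right_comm, Complex.mul_conj',
    Complex.ofReal_pow, mul_comm]

theorem mul_diagonal_mul_conjTranspose_apply_self_of_normalized_hadamard [DecidableEq n]
    {H U : Matrix n n ℂ} (hmod : ∀ i j, ‖H i j‖ = 1)
    (hU : U = (((√(Fintype.card n : ℝ))⁻¹ : ℝ) : ℂ) • H) (d : n → ℂ) (i : n) :
    (U * diagonal d * Uᴴ) i i = (∑ k, d k) / Fintype.card n := by
  simp only [mul_diagonal_mul_conjTranspose_apply_self, norm_sq_apply_of_normalized_hadamard hmod hU,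
    Finset.sum_div]
  push_cast
  exact Finset.sum_congr rfl fun k _ => inv_mul_eq_div _ _

theorem conj_diagonal_mul_conj_diagonal [DecidableEq n] {U : Matrix n n ℂ} (hU : Uᴴ * U = 1)
    (d₁ d₂ : n → ℂ) :
    (U * diagonal d₁ * Uᴴ) * (U * diagonal d₂ * Uᴴ) = U * diagonal (d₁ * d₂) * Uᴴ := by
  calc (U * diagonal d₁ * Uᴴ) * (U * diagonal d₂ * Uᴴ)
      = U * diagonal d₁ * (Uᴴ * U) * diagonal d₂ * Uᴴ := by simp only [Matrix.mul_assoc]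
    _ = U * diagonal (d₁ * d₂) * Uᴴ := by
      rw [hU, Matrix.mul_one, Matrix.mul_assoc U, diagonal_mul_diagonal]; rfl

theorem conj_diagonal_injective [DecidableEq n] {U : Matrix n n ℂ} (hU : Uᴴ * U = 1) :
    Function.Injective fun d : n → ℂ => U * diagonal d * Uᴴ := by
  intro d₁ d₂ h
  have key (d : n → ℂ) : Uᴴ * (U * diagonal d * Uᴴ) * U = diagonal d := by
    rw [← Matrix.mul_assoc, ← Matrix.mul_assoc, hU, Matrix.one_mul, Matrix.mul_assoc, hU,
      Matrix.mul_one]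
  apply diagonal_injective
  rw [← key d₁, ← key d₂]
  exact congrArg (fun M => Uᴴ * M * U) h

end Matrix

theorem stmt16 (H : Matrix (Fin 3) (Fin 3) ℂ)
    (hmod : ∀ i j, ‖H i j‖ = 1)
    (horth : ∀ j k : Fin 3, j ≠ k →
      dotProduct (star fun i => H i j) (fun i => H i k) = 0)
    (U : Matrix (Fin 3) (Fin 3) ℂ) (hU : U = (((Real.sqrt 3)⁻¹ : ℝ) : ℂ) • H) :
    (Pmat U).PosSemidef ∧
    (∀ t : ℝ, 0 ≤ t → t ≤ 4 →
      (Qmat U t).PosSemidef ∧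
      Pmat U * Qmat U t = 0 ∧
      ∀ i, Pmat U i i = Qmat U t i i ∧ Pmat U i i = (4 / 3 : ℂ)) ∧
    (∀ t t' : ℝ, 0 ≤ t → t ≤ 4 → 0 ≤ t' → t' ≤ 4 → Qmat U t = Qmat U t' → t = t') := by
  have hU' : U = (((√(Fintype.card (Fin 3) : ℝ))⁻¹ : ℝ) : ℂ) • H := by
    rw [Fintype.card_fin, Nat.cast_ofNat]; exact hU
  have hUU : Uᴴ * U = 1 := conjTranspose_mul_self_of_normalized_hadamard hmod horth hU'
  have hpsd (d : Fin 3 → ℂ) (hd : ∀ i, 0 ≤ d i) : (U * diagonal d * Uᴴ).PosSemidef :=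
    (posSemidef_diagonal_iff.2 hd).mul_mul_conjTranspose_same U
  refine ⟨hpsd _ ?_, fun t ht ht4 => ⟨hpsd _ ?_, ?_, fun i => ?_⟩, fun t t' _ _ _ _ hQ => ?_⟩
  · intro i; fin_cases i <;> simp
  · intro i; fin_cases i <;> simp [ht]
    simpa using Complex.real_le_real.2 ht4
  · have hdisjoint : ![(4 : ℂ), 0, 0] * ![0, ((4 - t : ℝ) : ℂ), (t : ℂ)] = 0 := by
      ext i; fin_cases i <;> simp
    rw [Pmat, Qmat, conj_diagonal_mul_conj_diagonal hUU, hdisjoint]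
    simp
  · simp only [Pmat, Qmat,
      mul_diagonal_mul_conjTranspose_apply_self_of_normalized_hadamard hmod hU',
      Fin.sum_univ_three, Fintype.card_fin]
    constructor <;> simp
  · simpa using congrFun (conj_diagonal_injective hUU hQ) 2
end

section
/- If P, Q ∈ M_n(ℂ) are positive semidefinite with PQ = 0 and equal diagonal entries in the canonical basis, and D_P, D_Q are their diagonalizations in a common orthonormal eigenbasis given by the columns of a unitary V, then the vector of eigenvalues of P minus the vector of eigenvalues of Q (in this common basis) is annihilated by right multiplication by the unistochastic matrix V* ∘ conj(V*): (λ(P) − λ(Q)) · (V* ∘ conj(V*)) = 0. -/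
open scoped ComplexOrder
open Matrix

theorem stmt19 {n : Type*} [Fintype n] [DecidableEq n]
    (P Q V : Matrix n n ℂ) (hP : P.PosSemidef) (hQ : Q.PosSemidef)
    (hPQ : P * Q = 0) (hdiag : ∀ i, P i i = Q i i)
    (hV : V ∈ Matrix.unitaryGroup n ℂ)
    (p q : n → ℝ)
    (hPdec : P = V * Matrix.diagonal (fun i => (p i : ℂ)) * Vᴴ)
    (hQdec : Q = V * Matrix.diagonal (fun i => (q i : ℂ)) * Vᴴ) :
    Matrix.vecMul (fun i => p i - q i) (Matrix.of fun i j => ‖Vᴴ i j‖ ^ 2) = 0 := by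
  funext j
  have key : ∀ r : n → ℝ, ∑ x, V j x * (r x : ℂ) * star (V j x)
      = ((∑ x, r x * ‖Vᴴ x j‖ ^ 2 : ℝ) : ℂ) := by
    intro r
    push_cast
    refine Finset.sum_congr rfl fun x _ => ?_
    rw [Matrix.conjTranspose_apply, norm_star, mul_comm (V j x),
      mul_assoc, Complex.star_def, Complex.mul_conj', mul_comm]
  have h := hdiag j
  rw [hPdec, hQdec] at h
  simp only [Matrix.mul_apply, Matrix.diagonal_apply, mul_ite, mul_zero,
    Finset.sum_ite_eq', Finset.mem_univ, if_true, Matrix.conjTranspose_apply,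
    ← Complex.star_def] at h
  rw [key p, key q] at h
  have h2 : ∑ x, p x * ‖Vᴴ x j‖ ^ 2 = ∑ x, q x * ‖Vᴴ x j‖ ^ 2 :=
    Complex.ofReal_injective h
  simp only [Matrix.vecMul, dotProduct, Matrix.of_apply, Pi.zero_apply, sub_mul,
    Finset.sum_sub_distrib, h2, sub_self]
end
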